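/- Let q ∈ (0, 1/2), Ψ_q(x) = √(x exp((Lx)^q)), and H_q(x) = x²/exp(2^q (Lx)^q). Then lim_{x→∞} Ψ_q(H_q(x))/x = 1, and consequently lim_{x→∞} Ψ_q⁻¹(x)/H_q(x) = 1. -/
import Mathlib


open Filter Set

private lemma aux_bern {q s v : ℝ} (hq0 : 0 ≤ q) (hq1 : q ≤ 1) (hs : 0 < s) (hv : 0 ≤ v) :
    (s + v) ^ q ≤ s ^ q + q * v * s ^ (q - 1) := by
  have h1 : s + v = s * (1 + v / s) := by field_simp
  have hvs : (0:ℝ) ≤ v / s := by positivity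
  have h2 : (1 + v / s) ^ q ≤ 1 + q * (v / s) :=
    rpow_one_add_le_one_add_mul_self (by linarith) hq0 hq1
  calc (s + v) ^ q = s ^ q * (1 + v / s) ^ q := by
        rw [h1, Real.mul_rpow hs.le (by linarith)]
    _ ≤ s ^ q * (1 + q * (v / s)) :=
        mul_le_mul_of_nonneg_left h2 (Real.rpow_nonneg hs.le q)
    _ = s ^ q + q * v * s ^ (q - 1) := by
        rw [Real.rpow_sub hs, Real.rpow_one]
        field_simp

private lemma aux_pow_tendsto {q : ℝ} (hq0 : 0 < q) (hq : q < 1 / 2) :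
    Tendsto (fun s : ℝ => 2 * s ^ (2 * q - 1)) atTop (nhds 0) := by
  have h := tendsto_rpow_neg_atTop (y := 1 - 2 * q) (by linarith)
  have h2 : Tendsto (fun s : ℝ => s ^ (2 * q - 1)) atTop (nhds 0) := by
    simpa [show -(1 - 2 * q) = 2 * q - 1 by ring] using h
  simpa using h2.const_mul 2

private lemma aux_keyPlus {q : ℝ} (hq0 : 0 < q) (hq : q < 1 / 2) :
    Tendsto (fun s : ℝ => (s + s ^ q) ^ q - s ^ q) atTop (nhds 0) := by
  apply squeeze_zero_norm' _ (aux_pow_tendsto hq0 hq)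
  filter_upwards [eventually_ge_atTop 1] with s hs
  have hs0 : (0:ℝ) < s := lt_of_lt_of_le one_pos hs
  have hsq : (0:ℝ) ≤ s ^ q := Real.rpow_nonneg hs0.le q
  have hlow : s ^ q ≤ (s + s ^ q) ^ q :=
    Real.rpow_le_rpow hs0.le (by linarith) hq0.le
  have hup : (s + s ^ q) ^ q ≤ s ^ q + q * s ^ q * s ^ (q - 1) :=
    aux_bern hq0.le (by linarith) hs0 hsq
  have hcomb : s ^ q * s ^ (q - 1) = s ^ (2 * q - 1) := by
    rw [← Real.rpow_add hs0]; ring_nf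
  have hpos : (0:ℝ) ≤ s ^ (2 * q - 1) := Real.rpow_nonneg hs0.le _
  rw [Real.norm_eq_abs, abs_of_nonneg (by linarith)]
  nlinarith [hup]

private lemma aux_keyMinus {q : ℝ} (hq0 : 0 < q) (hq : q < 1 / 2) :
    Tendsto (fun s : ℝ => (s - s ^ q) ^ q - s ^ q) atTop (nhds 0) := by
  apply squeeze_zero_norm' _ (aux_pow_tendsto hq0 hq)
  have hev : ∀ᶠ s : ℝ in atTop, (2:ℝ) ≤ s ^ (1 - q) :=
    (tendsto_rpow_atTop (by linarith : (0:ℝ) < 1 - q)).eventually_ge_atTop 2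
  filter_upwards [eventually_ge_atTop 1, hev] with s hs h2
  have hs0 : (0:ℝ) < s := lt_of_lt_of_le one_pos hs
  have hsq : (0:ℝ) ≤ s ^ q := Real.rpow_nonneg hs0.le q
  have hmul : s ^ q * s ^ (1 - q) = s := by
    rw [← Real.rpow_add hs0, show q + (1 - q) = 1 by ring, Real.rpow_one]
  have hsq2 : s ^ q ≤ s / 2 := by nlinarith
  have hu : s / 2 ≤ s - s ^ q := by linarith
  have hu0 : (0:ℝ) < s - s ^ q := by linarith
  have hneg : (s - s ^ q) ^ q - s ^ q ≤ 0 := by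
    have : (s - s ^ q) ^ q ≤ s ^ q := Real.rpow_le_rpow hu0.le (by linarith) hq0.le
    linarith
  have hlow : s ^ q ≤ (s - s ^ q) ^ q + q * s ^ q * (s - s ^ q) ^ (q - 1) := by
    have := aux_bern hq0.le (by linarith : q ≤ 1) hu0 hsq
    rwa [sub_add_cancel] at this
  have hanti : (s - s ^ q) ^ (q - 1) ≤ (s / 2) ^ (q - 1) :=
    Real.rpow_le_rpow_of_nonpos (by linarith) hu (by linarith)
  have hdiv : (s / 2) ^ (q - 1) = s ^ (q - 1) * 2 ^ (1 - q) := by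
    rw [Real.div_rpow hs0.le (by norm_num), div_eq_mul_inv,
      ← Real.rpow_neg (by norm_num : (0:ℝ) ≤ 2), show -(q - 1) = 1 - q by ring]
  have hcomb : s ^ q * s ^ (q - 1) = s ^ (2 * q - 1) := by
    rw [← Real.rpow_add hs0]; ring_nf
  have h2le : (2:ℝ) ^ (1 - q) ≤ 2 := by
    nth_rewrite 2 [show (2:ℝ) = 2 ^ (1:ℝ) by rw [Real.rpow_one]]
    exact Real.rpow_le_rpow_of_exponent_le one_le_two (by linarith)
  have hpos : (0:ℝ) ≤ s ^ (2 * q - 1) := Real.rpow_nonneg hs0.le _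
  have hpos2 : (0:ℝ) ≤ s ^ (q - 1) := Real.rpow_nonneg hs0.le _
  rw [Real.norm_eq_abs, abs_of_nonpos hneg]
  have hchain : q * s ^ q * (s - s ^ q) ^ (q - 1) ≤ 2 * s ^ (2 * q - 1) := by
    have h1 : q * s ^ q * (s - s ^ q) ^ (q - 1) ≤ q * s ^ q * (s / 2) ^ (q - 1) := by
      apply mul_le_mul_of_nonneg_left hanti (by positivity)
    have h2' : q * s ^ q * (s / 2) ^ (q - 1) = q * 2 ^ (1 - q) * s ^ (2 * q - 1) := by
      rw [hdiv, ← hcomb]; ring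
    have h3 : q * 2 ^ (1 - q) * s ^ (2 * q - 1) ≤ 2 * s ^ (2 * q - 1) := by
      have hq2 : q * 2 ^ (1 - q) ≤ 2 := by nlinarith [Real.rpow_nonneg (by norm_num : (0:ℝ) ≤ 2) (1 - q)]
      exact mul_le_mul_of_nonneg_right hq2 hpos
    linarith
  linarith

theorem stmt_19 (q : ℝ) (hq0 : 0 < q) (hq : q < 1 / 2)
    (L : ℝ → ℝ) (hL : ∀ x, L x = Real.log (max (Real.exp 1) x))
    (Ψq Ψqinv : ℝ → ℝ)
    (hΨq : ∀ x, Ψq x = Real.sqrt (x * Real.exp ((L x) ^ q)))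
    (Hq : ℝ → ℝ)
    (hHq : ∀ x, Hq x = x ^ 2 / Real.exp (2 ^ q * (L x) ^ q))
    (hinv₁ : ∀ᶠ x in atTop, Ψqinv (Ψq x) = x)
    (hinv₂ : ∀ᶠ y in atTop, Ψq (Ψqinv y) = y) :
    Tendsto (fun x => Ψq (Hq x) / x) atTop (nhds 1) ∧
    Tendsto (fun x => Ψqinv x / Hq x) atTop (nhds 1) := by
  have hL1 : ∀ x, 1 ≤ L x := by
    intro x
    rw [hL]
    calc (1:ℝ) = Real.log (Real.exp 1) := (Real.log_exp 1).symm
      _ ≤ Real.log (max (Real.exp 1) x) :=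
        Real.log_le_log (Real.exp_pos 1) (le_max_left _ _)
  have hLlog : ∀ x, Real.exp 1 ≤ x → L x = Real.log x := by
    intro x hx; rw [hL, max_eq_right hx]
  have hLtop : Tendsto L atTop atTop := by
    have hmax : Tendsto (fun x : ℝ => max (Real.exp 1) x) atTop atTop :=
      tendsto_atTop_mono (fun x => le_max_right _ _) tendsto_id
    have := Real.tendsto_log_atTop.comp hmax
    apply this.congr
    intro x; rw [hL]; rfl
  -- Hq tends to atTop
  have hHge : ∀ᶠ x in atTop, x ≤ Hq x := by
    filter_upwards [eventually_ge_atTop (Real.exp 1), hLtop.eventually_ge_atTop 4]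
      with x hx h4
    have hx0 : (0:ℝ) < x := lt_of_lt_of_le (Real.exp_pos 1) hx
    have ht1 : (1:ℝ) ≤ L x := hL1 x
    have hexp : 2 ^ q * (L x) ^ q ≤ L x := by
      have hqh : (L x) ^ q ≤ (L x) ^ (1/2 : ℝ) :=
        Real.rpow_le_rpow_of_exponent_le ht1 hq.le
      have hsqrt : (L x) ^ (1/2 : ℝ) = Real.sqrt (L x) := (Real.sqrt_eq_rpow _).symm
      have h2q : (2:ℝ) ^ q ≤ 2 := by
        nth_rewrite 2 [show (2:ℝ) = 2 ^ (1:ℝ) by rw [Real.rpow_one]]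
        exact Real.rpow_le_rpow_of_exponent_le one_le_two (by linarith)
      have hs2 : (2:ℝ) ≤ Real.sqrt (L x) := by
        have : Real.sqrt 4 ≤ Real.sqrt (L x) := Real.sqrt_le_sqrt h4
        rwa [show (4:ℝ) = 2 ^ 2 by norm_num, Real.sqrt_sq (by norm_num)] at this
      have hss : Real.sqrt (L x) * Real.sqrt (L x) = L x := Real.mul_self_sqrt (by linarith)
      have hq0' : (0:ℝ) ≤ (L x) ^ q := Real.rpow_nonneg (by linarith) q
      have hq0'' : (0:ℝ) ≤ (2:ℝ) ^ q := Real.rpow_nonneg (by norm_num) q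
      calc 2 ^ q * (L x) ^ q ≤ 2 * Real.sqrt (L x) := by
            rw [hsqrt] at hqh
            exact mul_le_mul h2q hqh hq0' (by norm_num)
        _ ≤ Real.sqrt (L x) * Real.sqrt (L x) :=
            mul_le_mul_of_nonneg_right hs2 (Real.sqrt_nonneg _)
        _ = L x := hss
    rw [hHq, le_div_iff₀ (Real.exp_pos _)]
    have : Real.exp (2 ^ q * (L x) ^ q) ≤ x := by
      calc Real.exp (2 ^ q * (L x) ^ q) ≤ Real.exp (L x) := Real.exp_le_exp.2 hexp
        _ = x := by rw [hLlog x hx, Real.exp_log hx0]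
    nlinarith
  have hHtop : Tendsto Hq atTop atTop := tendsto_atTop_mono' atTop hHge tendsto_id
  -- Part 1
  have hcomp1 : Tendsto (fun x => Real.exp (((2 * L x - (2 * L x) ^ q) ^ q - (2 * L x) ^ q) / 2))
      atTop (nhds 1) := by
    have h2L : Tendsto (fun x => 2 * L x) atTop atTop :=
      (tendsto_const_mul_atTop_of_pos (by norm_num)).2 hLtop
    have hk := ((aux_keyMinus hq0 hq).div_const 2).comp h2L
    have he : Tendsto Real.exp (nhds ((0:ℝ)/2)) (nhds 1) := by
      simpa using Real.continuous_exp.tendsto (0/2 : ℝ)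
    exact he.comp hk
  have heq1 : ∀ᶠ x in atTop,
      Ψq (Hq x) / x = Real.exp (((2 * L x - (2 * L x) ^ q) ^ q - (2 * L x) ^ q) / 2) := by
    filter_upwards [eventually_ge_atTop (Real.exp 1), hHtop.eventually_ge_atTop (Real.exp 1)]
      with x hx hHx
    have hx0 : (0:ℝ) < x := lt_of_lt_of_le (Real.exp_pos 1) hx
    have ht1 : (1:ℝ) ≤ L x := hL1 x
    have hlx : L x = Real.log x := hLlog x hx
    have hmulr : (2 * L x) ^ q = 2 ^ q * (L x) ^ q :=
      Real.mul_rpow (by norm_num) (by linarith)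
    have hLH : L (Hq x) = 2 * L x - (2 * L x) ^ q := by
      rw [hLlog _ hHx, hHq, Real.log_div (by positivity) (Real.exp_ne_zero _),
        Real.log_pow, Real.log_exp, hmulr, hlx]
      push_cast; ring
    set A := (2 * L x - (2 * L x) ^ q) ^ q with hA
    have hkey : Ψq (Hq x) = x * Real.exp ((A - (2 * L x) ^ q) / 2) := by
      have hexp2 : Real.exp ((A - (2 * L x) ^ q) / 2) ^ 2 = Real.exp (A - (2 * L x) ^ q) := by
        rw [sq, ← Real.exp_add]
        ring_nf
      have h1 : x ^ 2 / Real.exp (2 ^ q * (L x) ^ q) * Real.exp A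
          = (x * Real.exp ((A - (2 * L x) ^ q) / 2)) ^ 2 := by
        rw [mul_pow, hexp2, Real.exp_sub, hmulr]
        ring
      rw [hΨq, hLH, hHq, ← hA, h1, Real.sqrt_sq (by positivity)]
    rw [hkey, mul_div_cancel_left₀ _ (ne_of_gt hx0)]
  have hpart1 : Tendsto (fun x => Ψq (Hq x) / x) atTop (nhds 1) :=
    Filter.Tendsto.congr' (Filter.EventuallyEq.symm heq1) hcomp1
  -- Part 2
  have hcomp2 : Tendsto (fun x => Real.exp ((L x + (L x) ^ q) ^ q - (L x) ^ q))
      atTop (nhds 1) := by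
    have hk := (aux_keyPlus hq0 hq).comp hLtop
    have he : Tendsto Real.exp (nhds (0:ℝ)) (nhds 1) := by
      simpa using Real.continuous_exp.tendsto (0 : ℝ)
    exact he.comp hk
  have heq2 : ∀ᶠ x in atTop,
      x / Hq (Ψq x) = Real.exp ((L x + (L x) ^ q) ^ q - (L x) ^ q) := by
    filter_upwards [eventually_ge_atTop (Real.exp 2)] with x hx
    have hx1 : Real.exp 1 ≤ x := le_trans (Real.exp_le_exp.2 one_le_two) hx
    have hx0 : (0:ℝ) < x := lt_of_lt_of_le (Real.exp_pos 1) hx1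
    have ht1 : (1:ℝ) ≤ L x := hL1 x
    have hlx : L x = Real.log x := hLlog x hx1
    have htq : (0:ℝ) ≤ (L x) ^ q := Real.rpow_nonneg (by linarith) q
    have hψe : Real.exp 1 ≤ Ψq x := by
      rw [hΨq]
      calc Real.exp 1 = Real.sqrt (Real.exp 2) := by
            rw [← Real.exp_half]; norm_num
        _ ≤ Real.sqrt (x * Real.exp ((L x) ^ q)) := by
            apply Real.sqrt_le_sqrt
            have h1 : (1:ℝ) ≤ Real.exp ((L x) ^ q) := Real.one_le_exp htq
            nlinarith
    have hψ0 : (0:ℝ) < Ψq x := lt_of_lt_of_le (Real.exp_pos 1) hψe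
    have hLψ : L (Ψq x) = (L x + (L x) ^ q) / 2 := by
      rw [hLlog _ hψe, hΨq, Real.log_sqrt (by positivity),
        Real.log_mul (ne_of_gt hx0) (Real.exp_ne_zero _), Real.log_exp, hlx]
    have hsq : Ψq x ^ 2 = x * Real.exp ((L x) ^ q) := by
      rw [hΨq, Real.sq_sqrt (by positivity)]
    have h2exp : 2 ^ q * ((L x + (L x) ^ q) / 2) ^ q = (L x + (L x) ^ q) ^ q := by
      rw [← Real.mul_rpow (by norm_num) (by positivity)]
      congr 1
      ring
    have hHψ : Hq (Ψq x) = x * Real.exp ((L x) ^ q) / Real.exp ((L x + (L x) ^ q) ^ q) := by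
      rw [hHq, hLψ, hsq, h2exp]
    rw [hHψ, Real.exp_sub, div_div_eq_mul_div]
    exact mul_div_mul_left _ _ (ne_of_gt hx0)
  have hratio : Tendsto (fun x => x / Hq (Ψq x)) atTop (nhds 1) :=
    Filter.Tendsto.congr' (Filter.EventuallyEq.symm heq2) hcomp2
  have hinvtop : Tendsto Ψqinv atTop atTop := by
    rw [tendsto_atTop]
    intro C
    set D := max C 1 with hD
    set B := Real.sqrt (D * Real.exp ((L D) ^ q)) with hB
    filter_upwards [hinv₂, eventually_gt_atTop B] with y h2 hy
    by_contra hC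
    push_neg at hC
    have hxD : Ψqinv y ≤ D := le_trans hC.le (le_max_left _ _)
    have hD0 : (0:ℝ) < D := lt_of_lt_of_le one_pos (le_max_right _ _)
    have harg : Ψqinv y * Real.exp ((L (Ψqinv y)) ^ q) ≤ D * Real.exp ((L D) ^ q) := by
      rcases le_or_gt (Ψqinv y) 0 with h0 | h0
      · exact le_trans (mul_nonpos_of_nonpos_of_nonneg h0 (Real.exp_pos _).le)
          (by positivity)
      · have hLm : L (Ψqinv y) ≤ L D := by
          rw [hL, hL]
          exact Real.log_le_log (lt_max_of_lt_left (Real.exp_pos 1))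
            (max_le_max le_rfl hxD)
        have hLnn : (0:ℝ) ≤ L (Ψqinv y) := le_trans zero_le_one (hL1 _)
        exact mul_le_mul hxD
          (Real.exp_le_exp.2 (Real.rpow_le_rpow hLnn hLm hq0.le))
          (Real.exp_pos _).le hD0.le
    have : y ≤ B := by
      rw [← h2, hΨq, hB]
      exact Real.sqrt_le_sqrt harg
    linarith
  have hfin : ∀ᶠ y in atTop, Ψqinv y / Hq (Ψq (Ψqinv y)) = Ψqinv y / Hq y := by
    filter_upwards [hinv₂] with y h2
    rw [h2]
  refine ⟨hpart1, Filter.Tendsto.congr' hfin ?_⟩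
  exact hratio.comp hinvtop
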